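/- Let G be a weighted graph with Deg_max < ∞ satisfying CD(ρ, n) with ρ ≤ K pointwise, and suppose ‖P_t^{2ρ}‖_{∞,∞} ≤ e^{K(T-t)} for all t > 0 and some T > 0. Then for every bounded function f and every t > 0, Γ(P_t f) ≤ K e^{KT} / sinh(Kt) · ‖f‖_∞² ≤ (e^{KT}/t) ‖f‖_∞². -/

import Mathlib

open Real ENNReal

structure WGraph (V : Type*) where
  w : V → V → ℝ
  m : V → ℝ
  symm : ∀ x y, w x y = w y x
  nonneg : ∀ x y, 0 ≤ w x y
  loopless : ∀ x, w x x = 0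
  mpos : ∀ x, 0 < m x
  locFin : ∀ x, (Function.support (w x)).Finite

namespace WGraph

variable {V : Type*} (G : WGraph V)

/-- transition weights -/
noncomputable def q (x y : V) : ℝ := G.w x y / G.m x

/-- the graph Laplacian `Δ` -/
noncomputable def lap (f : V → ℝ) (x : V) : ℝ := ∑' y, G.q x y * (f y - f x)

/-- the weighted vertex degree -/
noncomputable def deg (x : V) : ℝ := ∑' y, G.q x y

/-- the bilinear carré du champ operator `Γ(f,g)` -/
noncomputable def gammaB (f g : V → ℝ) (x : V) : ℝ :=
  (1 / 2) * (G.lap (f * g) x - f x * G.lap g x - g x * G.lap f x)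

/-- the carré du champ operator `Γ f` -/
noncomputable def gamma (f : V → ℝ) : V → ℝ := G.gammaB f f

/-- the iterated carré du champ operator `Γ₂ f` -/
noncomputable def gamma2 (f : V → ℝ) (x : V) : ℝ :=
  (1 / 2) * G.lap (G.gamma f) x - G.gammaB f (G.lap f) x

/-- boundedness of a function -/
def Bdd (f : V → ℝ) : Prop := ∃ C, ∀ x, |f x| ≤ C

/-- the variable curvature dimension condition `CD(ρ,n)` -/
def CD (ρ : V → ℝ) (n : ℝ≥0∞) : Prop :=
  ∀ f, Bdd f → ∀ x, ρ x * G.gamma f x + (n⁻¹).toReal * (G.lap f x) ^ 2 ≤ G.gamma2 f x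

/-- the underlying simple graph (for the combinatorial metric) -/
def toSimpleGraph : SimpleGraph V where
  Adj x y := 0 < G.w x y
  symm := by constructor; intro x y h; rwa [G.symm] at h
  loopless := by constructor; intro x h; rw [G.loopless] at h; exact lt_irrefl 0 h

/-- `P` is the semigroup `e^{-t(L+W)}` generated by `-(L+W) = Δ - W`. -/
def IsSemigroup (W : V → ℝ) (P : ℝ → (V → ℝ) → V → ℝ) : Prop :=
  (∀ f, P 0 f = f) ∧
  (∀ s t, 0 ≤ s → 0 ≤ t → ∀ f, P (s + t) f = P s (P t f)) ∧
  (∀ t f g, P t (f + g) = P t f + P t g) ∧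
  (∀ t (c : ℝ) f, P t (c • f) = c • P t f) ∧
  (∀ f, Bdd f → ∀ t, 0 ≤ t → Bdd (P t f)) ∧
  (∀ f, Bdd f → ∀ x, ContinuousOn (fun s => P s f x) (Set.Ici 0)) ∧
  (∀ f, Bdd f → ∀ x t, 0 < t →
    HasDerivAt (fun s => P s f x) (G.lap (P t f) x - W x * P t f x) t) ∧
  (∀ f, Bdd f → (∀ x, 0 ≤ f x) → ∀ t, 0 ≤ t → ∀ x, 0 ≤ P t f x)

end WGraph


open WGraph Set Finset Filter

section AuxBasic
variable {V : Type*} (G : WGraph V)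

lemma aux_q_nonneg (x y : V) : 0 ≤ G.q x y := div_nonneg (G.nonneg x y) (G.mpos x).le

lemma aux_tsum_eq (x : V) (r : V → ℝ) :
    ∑' y, G.q x y * r y = ∑ y ∈ (G.locFin x).toFinset, G.q x y * r y := by
  refine tsum_eq_sum ?_
  intro b hb
  have hw : G.w x b = 0 := by
    by_contra h
    exact hb ((G.locFin x).mem_toFinset.mpr h)
  simp [WGraph.q, hw]

lemma aux_lap_eq (g : V → ℝ) (x : V) :
    G.lap g x = ∑ y ∈ (G.locFin x).toFinset, G.q x y * (g y - g x) :=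
  aux_tsum_eq G x (fun y => g y - g x)

lemma aux_deg_eq (x : V) : G.deg x = ∑ y ∈ (G.locFin x).toFinset, G.q x y := by
  have h := aux_tsum_eq G x (fun _ => 1)
  simpa [WGraph.deg] using h

lemma aux_deg_nonneg (x : V) : 0 ≤ G.deg x := by
  rw [aux_deg_eq]
  exact Finset.sum_nonneg fun y _ => aux_q_nonneg G x y

lemma aux_lap_abs_le (g : V → ℝ) (C : ℝ) (hg : ∀ y, |g y| ≤ C) (x : V) :
    |G.lap g x| ≤ 2 * G.deg x * C := by
  rw [aux_lap_eq, aux_deg_eq]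
  calc |∑ y ∈ (G.locFin x).toFinset, G.q x y * (g y - g x)|
      ≤ ∑ y ∈ (G.locFin x).toFinset, |G.q x y * (g y - g x)| := Finset.abs_sum_le_sum_abs _ _
    _ ≤ ∑ y ∈ (G.locFin x).toFinset, G.q x y * (2 * C) := by
        refine Finset.sum_le_sum fun y _ => ?_
        rw [abs_mul, abs_of_nonneg (aux_q_nonneg G x y)]
        refine mul_le_mul_of_nonneg_left ?_ (aux_q_nonneg G x y)
        calc |g y - g x| ≤ |g y| + |g x| := abs_sub _ _
          _ ≤ 2 * C := by have := hg y; have := hg x; linarith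
    _ = 2 * (∑ y ∈ (G.locFin x).toFinset, G.q x y) * C := by
        rw [← Finset.sum_mul]; ring
  
lemma aux_gammaB_eq (u v : V → ℝ) (x : V) :
    G.gammaB u v x
      = 2⁻¹ * ∑ y ∈ (G.locFin x).toFinset, G.q x y * ((u y - u x) * (v y - v x)) := by
  rw [WGraph.gammaB, aux_lap_eq, aux_lap_eq, aux_lap_eq, Finset.mul_sum, Finset.mul_sum,
    ← Finset.sum_sub_distrib, ← Finset.sum_sub_distrib, one_div]
  congr 1
  refine Finset.sum_congr rfl fun y _ => ?_
  simp only [Pi.mul_apply]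
  ring

lemma aux_gamma_eq (u : V → ℝ) (x : V) :
    G.gamma u x = 2⁻¹ * ∑ y ∈ (G.locFin x).toFinset, G.q x y * (u y - u x) ^ 2 := by
  rw [WGraph.gamma, aux_gammaB_eq]
  congr 1
  exact Finset.sum_congr rfl fun y _ => by ring

lemma aux_gamma_nonneg (u : V → ℝ) (x : V) : 0 ≤ G.gamma u x := by
  rw [aux_gamma_eq]
  refine mul_nonneg (by norm_num) (Finset.sum_nonneg fun y _ => ?_)
  exact mul_nonneg (aux_q_nonneg G x y) (sq_nonneg _)

lemma aux_gammaB_abs_le (u v : V → ℝ) (Cu Cv : ℝ) (hu : ∀ y, |u y| ≤ Cu)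
    (hv : ∀ y, |v y| ≤ Cv) (x : V) :
    |G.gammaB u v x| ≤ 2 * G.deg x * (Cu * Cv) := by
  rw [aux_gammaB_eq, aux_deg_eq]
  rw [abs_mul, abs_of_nonneg (by norm_num : (0:ℝ) ≤ 2⁻¹)]
  calc 2⁻¹ * |∑ y ∈ (G.locFin x).toFinset, G.q x y * ((u y - u x) * (v y - v x))|
      ≤ 2⁻¹ * ∑ y ∈ (G.locFin x).toFinset, G.q x y * ((2*Cu) * (2*Cv)) := by
        refine mul_le_mul_of_nonneg_left ?_ (by norm_num)
        refine le_trans (Finset.abs_sum_le_sum_abs _ _) (Finset.sum_le_sum fun y _ => ?_)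
        rw [abs_mul, abs_of_nonneg (aux_q_nonneg G x y)]
        refine mul_le_mul_of_nonneg_left ?_ (aux_q_nonneg G x y)
        rw [abs_mul]
        refine mul_le_mul ?_ ?_ (abs_nonneg _) ?_
        · calc |u y - u x| ≤ |u y| + |u x| := abs_sub _ _
            _ ≤ 2 * Cu := by have := hu y; have := hu x; linarith
        · calc |v y - v x| ≤ |v y| + |v x| := abs_sub _ _
            _ ≤ 2 * Cv := by have := hv y; have := hv x; linarith
        · have := (abs_nonneg (u y - u x)).trans (calc |u y - u x| ≤ |u y| + |u x| := abs_sub _ _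
            _ ≤ 2*Cu := by have := hu y; have := hu x; linarith)
          linarith
    _ = 2 * (∑ y ∈ (G.locFin x).toFinset, G.q x y) * (Cu * Cv) := by
        rw [← Finset.sum_mul]; ring

lemma aux_gammaB_sub (u u' v v' : V → ℝ) (x : V) :
    G.gammaB u v x - G.gammaB u' v' x
      = G.gammaB (fun y => u y - u' y) v x + G.gammaB u' (fun y => v y - v' y) x := by
  rw [aux_gammaB_eq, aux_gammaB_eq, aux_gammaB_eq, aux_gammaB_eq, ← mul_sub, ← mul_add,
    ← Finset.sum_sub_distrib, ← Finset.sum_add_distrib]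
  congr 1
  refine Finset.sum_congr rfl fun y _ => ?_
  ring

lemma aux_lap_sub (u v : V → ℝ) (x : V) :
    G.lap (fun y => u y - v y) x = G.lap u x - G.lap v x := by
  rw [aux_lap_eq, aux_lap_eq, aux_lap_eq, ← Finset.sum_sub_distrib]
  exact Finset.sum_congr rfl fun y _ => by ring

lemma aux_lap_ge (v : V → ℝ) (hv : ∀ z, 0 ≤ v z) (y : V) :
    -(G.deg y * v y) ≤ G.lap v y := by
  rw [aux_lap_eq, aux_deg_eq]
  have h : ∑ z ∈ (G.locFin y).toFinset, G.q y z * (v z - v y)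
      = (∑ z ∈ (G.locFin y).toFinset, G.q y z * v z)
        - (∑ z ∈ (G.locFin y).toFinset, G.q y z) * v y := by
    rw [Finset.sum_mul, ← Finset.sum_sub_distrib]
    exact Finset.sum_congr rfl fun z _ => by ring
  rw [h]
  have h2 : 0 ≤ ∑ z ∈ (G.locFin y).toFinset, G.q y z * v z :=
    Finset.sum_nonneg fun z _ => mul_nonneg (aux_q_nonneg G y z) (hv z)
  linarith

end AuxBasic

section AuxSemigroup
variable {V : Type*} (G : WGraph V)

lemma aux_map_zero {R : ℝ → (V → ℝ) → V → ℝ}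
    (h4 : ∀ t (c : ℝ) f, R t (c • f) = c • R t f) (t : ℝ) : R t (0 : V → ℝ) = 0 := by
  have h := h4 t 0 (0 : V → ℝ)
  simpa using h

lemma aux_map_sub {R : ℝ → (V → ℝ) → V → ℝ}
    (h3 : ∀ t f g, R t (f + g) = R t f + R t g)
    (h4 : ∀ t (c : ℝ) f, R t (c • f) = c • R t f) (t : ℝ) (u v : V → ℝ) :
    R t (u - v) = R t u - R t v := by
  have h := h3 t (u - v) v
  rw [sub_add_cancel] at h
  rw [h]; abel

lemma aux_bdd_sub {u v : V → ℝ} (hu : WGraph.Bdd u) (hv : WGraph.Bdd v) :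
    WGraph.Bdd (u - v) := by
  obtain ⟨Cu, hCu⟩ := hu; obtain ⟨Cv, hCv⟩ := hv
  exact ⟨Cu + Cv, fun y => by
    have := hCu y; have := hCv y
    have h := abs_sub (u y) (v y)
    simp only [Pi.sub_apply]
    calc |u y - v y| ≤ |u y| + |v y| := abs_sub _ _
      _ ≤ Cu + Cv := by linarith⟩

lemma aux_mono {W : V → ℝ} {R : ℝ → (V → ℝ) → V → ℝ} (hR : G.IsSemigroup W R)
    {u v : V → ℝ} (hu : WGraph.Bdd u) (hv : WGraph.Bdd v) (huv : ∀ y, u y ≤ v y)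
    {t : ℝ} (ht : 0 ≤ t) (z : V) : R t u z ≤ R t v z := by
  obtain ⟨h1, h2, h3, h4, h5, h6, h7, h8⟩ := hR
  have hb : WGraph.Bdd (v - u) := aux_bdd_sub hv hu
  have h0 : ∀ y, 0 ≤ (v - u) y := fun y => by
    simp only [Pi.sub_apply]; linarith [huv y]
  have hpos := h8 (v - u) hb h0 t ht z
  rw [aux_map_sub h3 h4] at hpos
  simp only [Pi.sub_apply] at hpos
  linarith

/-- Grönwall-type lower-bound monotonicity for positivity-preserving semigroups. -/
lemma aux_gronwall {W : V → ℝ} {R : ℝ → (V → ℝ) → V → ℝ} (hR : G.IsSemigroup W R)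
    {g : V → ℝ} (hg : WGraph.Bdd g) (hg0 : ∀ y, 0 ≤ g y) (y : V) {s r : ℝ}
    (hs : 0 ≤ s) (hsr : s ≤ r) :
    Real.exp ((G.deg y + W y) * s) * R s g y
      ≤ Real.exp ((G.deg y + W y) * r) * R r g y := by
  obtain ⟨h1, h2, h3, h4, h5, h6, h7, h8⟩ := hR
  set c : ℝ := G.deg y + W y with hc
  set F : ℝ → ℝ := fun σ => Real.exp (c * σ) * R σ g y with hF
  have hr : 0 ≤ r := hs.trans hsr
  have hder : ∀ σ ∈ Set.Ioo (0:ℝ) r,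
      HasDerivAt F (c * Real.exp (c * σ) * R σ g y
        + Real.exp (c * σ) * (G.lap (R σ g) y - W y * R σ g y)) σ := by
    intro σ hσ
    have he : HasDerivAt (fun σ => Real.exp (c * σ)) (Real.exp (c * σ) * c) σ := by
      simpa using ((hasDerivAt_id σ).const_mul c).exp
    have hd := h7 g hg y σ hσ.1
    have := he.mul hd
    have this' : HasDerivAt F _ σ := this
    convert this' using 1
    ring
  have hmono : MonotoneOn F (Set.Icc 0 r) := by
    refine monotoneOn_of_deriv_nonneg (convex_Icc 0 r) ?_ ?_ ?_
    · exact ((Real.continuous_exp.comp (continuous_const.mul continuous_id)).continuousOn).mul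
        ((h6 g hg y).mono Set.Icc_subset_Ici_self)
    · intro σ hσ
      rw [interior_Icc] at hσ
      exact ((hder σ hσ).differentiableAt).differentiableWithinAt
    · intro σ hσ
      rw [interior_Icc] at hσ
      rw [(hder σ hσ).deriv]
      have hpos : ∀ z, 0 ≤ R σ g z := h8 g hg hg0 σ hσ.1.le
      have hlap := aux_lap_ge G (R σ g) hpos y
      have hexp := Real.exp_pos (c * σ)
      have : c * (R σ g y) + (G.lap (R σ g) y - W y * R σ g y)
          = G.deg y * R σ g y + G.lap (R σ g) y := by rw [hc]; ring
      nlinarith [hpos y]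
  have h0m : s ∈ Set.Icc (0:ℝ) r := ⟨hs, hsr⟩
  have h1m : r ∈ Set.Icc (0:ℝ) r := ⟨hr, le_refl r⟩
  exact hmono h0m h1m hsr

/-- Lower bound on ρ derived from the norm bound on Q. -/
lemma aux_rho_lb {ρ : V → ℝ} {Q : ℝ → (V → ℝ) → V → ℝ} {K T : ℝ}
    (hK : 0 < K) (hT : 0 < T) (hQ : G.IsSemigroup (2 • ρ) Q)
    (hQnorm : ∀ t, 0 < t → ∀ g : V → ℝ, ∀ C, 0 ≤ C → (∀ x, |g x| ≤ C) →
      ∀ x, |Q t g x| ≤ Real.exp (K * (T - t)) * C) (y : V) :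
    (K - G.deg y) / 2 ≤ ρ y := by
  classical
  set g : V → ℝ := fun z => if z = y then (1:ℝ) else 0 with hgdef
  have hgb : WGraph.Bdd g := ⟨1, fun z => by by_cases h : z = y <;> simp [hgdef, h]⟩
  have hg0 : ∀ z, 0 ≤ g z := fun z => by by_cases h : z = y <;> simp [hgdef, h]
  set c : ℝ := G.deg y + (2 • ρ) y with hc
  have key : ∀ r : ℝ, 0 < r → 0 ≤ c * r + K * (T - r) := by
    intro r hrpos
    have hgr := aux_gronwall G hQ hgb hg0 y (le_refl 0) hrpos.le
    rw [hQ.1 g] at hgr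
    have hgy : g y = 1 := by simp [hgdef]
    rw [hgy, mul_zero, Real.exp_zero, one_mul] at hgr
    have hb := hQnorm r hrpos g 1 zero_le_one (fun z => by
      by_cases h : z = y <;> simp [hgdef, h]) y
    have hQr : Q r g y ≤ Real.exp (K * (T - r)) * 1 := (le_abs_self _).trans hb
    have hexp := Real.exp_pos (c * r)
    have h2 : (1:ℝ) ≤ Real.exp (c * r) * (Real.exp (K * (T - r)) * 1) := by
      calc (1:ℝ) ≤ Real.exp (c * r) * Q r g y := hgr
        _ ≤ Real.exp (c * r) * (Real.exp (K * (T - r)) * 1) := by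
            exact mul_le_mul_of_nonneg_left hQr hexp.le
    rw [mul_one, ← Real.exp_add] at h2
    exact Real.one_le_exp_iff.mp h2
  by_contra hcon
  push_neg at hcon
  have hck : c < K := by
    have : (2 • ρ) y = 2 * ρ y := by simp [two_smul, two_mul]
    rw [hc, this]; linarith
  set r : ℝ := K * T / (K - c) + 1 with hr
  have hKc : 0 < K - c := by linarith
  have hrpos : 0 < r := by positivity
  have h := key r hrpos
  have hdiv : (K - c) * (K * T / (K - c)) = K * T := by
    field_simp
  have hexp : (K - c) * r = K * T + (K - c) := by
    rw [hr, mul_add, hdiv, mul_one]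
  nlinarith [h, hexp, hKc]

/-- Lipschitz bound from a derivative bound on the open interval. -/
lemma aux_lip {φ ψ : ℝ → ℝ} {a b M : ℝ}
    (hc : ContinuousOn φ (Set.Icc a b))
    (hd : ∀ s ∈ Set.Ioo a b, HasDerivAt φ (ψ s) s)
    (hψ : ∀ s ∈ Set.Ioo a b, |ψ s| ≤ M) :
    ∀ s ∈ Set.Icc a b, ∀ s' ∈ Set.Icc a b, |φ s - φ s'| ≤ M * |s - s'| := by
  have main : ∀ s ∈ Set.Icc a b, ∀ s' ∈ Set.Icc a b, s ≤ s' → φ s' - φ s ≤ M * (s' - s)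
      ∧ φ s - φ s' ≤ M * (s' - s) := by
    intro s hs s' hs' hss
    have hmono : MonotoneOn (fun r => M * r - φ r) (Set.Icc a b) := by
      refine monotoneOn_of_deriv_nonneg (convex_Icc a b) ?_ ?_ ?_
      · exact (continuous_const.mul continuous_id).continuousOn.sub hc
      · intro σ hσ; rw [interior_Icc] at hσ
        exact (((hasDerivAt_id σ).const_mul M).sub (hd σ hσ)).differentiableAt.differentiableWithinAt
      · intro σ hσ; rw [interior_Icc] at hσ
        have hh : HasDerivAt (fun r => M * r - φ r) (M - ψ σ) σ := by
          exact (((hasDerivAt_id σ).const_mul M).sub (hd σ hσ)).congr_deriv (by simp)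
        rw [hh.deriv]
        have := abs_le.mp (hψ σ hσ)
        linarith [this.2]
    have hmono2 : MonotoneOn (fun r => M * r + φ r) (Set.Icc a b) := by
      refine monotoneOn_of_deriv_nonneg (convex_Icc a b) ?_ ?_ ?_
      · exact (continuous_const.mul continuous_id).continuousOn.add hc
      · intro σ hσ; rw [interior_Icc] at hσ
        exact (((hasDerivAt_id σ).const_mul M).add (hd σ hσ)).differentiableAt.differentiableWithinAt
      · intro σ hσ; rw [interior_Icc] at hσ
        have hh : HasDerivAt (fun r => M * r + φ r) (M + ψ σ) σ := by
          exact (((hasDerivAt_id σ).const_mul M).add (hd σ hσ)).congr_deriv (by simp)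
        rw [hh.deriv]
        have := abs_le.mp (hψ σ hσ)
        linarith [this.1]
    have h1 := hmono hs hs' hss
    have h2 := hmono2 hs hs' hss
    simp only [] at h1 h2
    constructor <;> linarith
  intro s hs s' hs'
  rcases le_total s s' with h | h
  · have := main s hs s' hs' h
    rw [abs_of_nonpos (by linarith : s - s' ≤ 0)]
    rw [abs_le]
    constructor <;> nlinarith [this.1, this.2]
  · have := main s' hs' s hs h
    rw [abs_of_nonneg (by linarith : 0 ≤ s - s')]
    rw [abs_le]
    constructor <;> nlinarith [this.1, this.2]

end AuxSemigroup

section AuxSandwich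
variable {V : Type*} (G : WGraph V)

lemma aux_Qb {ρ : V → ℝ} {Q : ℝ → (V → ℝ) → V → ℝ} {K T : ℝ}
    (hK : 0 < K) (hT : 0 < T) (hQ : G.IsSemigroup (2 • ρ) Q)
    (hQnorm : ∀ t, 0 < t → ∀ g : V → ℝ, ∀ C, 0 ≤ C → (∀ x, |g x| ≤ C) →
      ∀ x, |Q t g x| ≤ Real.exp (K * (T - t)) * C)
    {τ : ℝ} (hτ : 0 ≤ τ) {u : V → ℝ} {C : ℝ} (hC : 0 ≤ C) (hu : ∀ y, |u y| ≤ C) (z : V) :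
    |Q τ u z| ≤ Real.exp (K * T) * C := by
  rcases eq_or_lt_of_le hτ with h | h
  · rw [← h, hQ.1 u]
    calc |u z| ≤ C := hu z
      _ = 1 * C := (one_mul C).symm
      _ ≤ Real.exp (K * T) * C := by
          refine mul_le_mul_of_nonneg_right ?_ hC
          exact Real.one_le_exp_iff.mpr (by positivity)
  · refine (hQnorm τ h u C hC hu z).trans ?_
    refine mul_le_mul_of_nonneg_right (Real.exp_le_exp.mpr ?_) hC
    nlinarith

/-- The derivative of the semigroup interpolation `s ↦ Q (b-s) (g s) z`. -/
lemma aux_sandwich {ρ : V → ℝ} {Q : ℝ → (V → ℝ) → V → ℝ} {K T : ℝ}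
    (hK : 0 < K) (hT : 0 < T) (hQ : G.IsSemigroup (2 • ρ) Q)
    (hQnorm : ∀ t, 0 < t → ∀ g : V → ℝ, ∀ C, 0 ≤ C → (∀ x, |g x| ≤ C) →
      ∀ x, |Q t g x| ≤ Real.exp (K * (T - t)) * C)
    {b : ℝ} (hb : 0 < b) (g g' : ℝ → V → ℝ) (Mg Lip : ℝ) (hMg : 0 ≤ Mg) (hLip : 0 ≤ Lip)
    (hbg : ∀ s ∈ Set.Icc (0:ℝ) b, ∀ y, |g s y| ≤ Mg)
    (hbg' : ∀ s ∈ Set.Icc (0:ℝ) b, ∀ y, |g' s y| ≤ Mg)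
    (hd : ∀ y : V, ∀ s ∈ Set.Ioo (0:ℝ) b, HasDerivAt (fun r => g r y) (g' s y) s)
    (hcy : ∀ y : V, ContinuousOn (fun r => g r y) (Set.Icc 0 b))
    (hl : ∀ s ∈ Set.Icc (0:ℝ) b, ∀ s' ∈ Set.Icc (0:ℝ) b, ∀ y,
      |g' s y - g' s' y| ≤ Lip * |s - s'|)
    (z : V) :
    (∀ s₀ ∈ Set.Ioo (0:ℝ) b, HasDerivAt (fun s => Q (b - s) (g s) z)
      ((2 • ρ) z * Q (b - s₀) (g s₀) z - G.lap (Q (b - s₀) (g s₀)) z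
        + Q (b - s₀) (g' s₀) z) s₀)
    ∧ ContinuousOn (fun s => Q (b - s) (g s) z) (Set.Icc 0 b) := by
  obtain ⟨hQ1, hQ2, hQ3, hQ4, hQ5, hQ6, hQ7, hQ8⟩ := hQ
  -- boundedness
  have hBg : ∀ s ∈ Set.Icc (0:ℝ) b, WGraph.Bdd (g s) := fun s hs => ⟨Mg, hbg s hs⟩
  have hBg' : ∀ s ∈ Set.Icc (0:ℝ) b, WGraph.Bdd (g' s) := fun s hs => ⟨Mg, hbg' s hs⟩
  -- per-vertex Lipschitz bound for g
  have hgLip : ∀ s ∈ Set.Icc (0:ℝ) b, ∀ s' ∈ Set.Icc (0:ℝ) b, ∀ y,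
      |g s y - g s' y| ≤ Mg * |s - s'| := by
    intro s hs s' hs' y
    exact aux_lip (hcy y) (fun σ hσ => hd y σ hσ)
      (fun σ hσ => hbg' σ (Set.Ioo_subset_Icc_self hσ) y) s hs s' hs'
  -- Taylor-type estimate
  have hE : ∀ s₀ ∈ Set.Ioo (0:ℝ) b, ∀ s ∈ Set.Icc (0:ℝ) b, ∀ y,
      |g s y - g s₀ y - (s - s₀) * g' s₀ y| ≤ (Lip * |s - s₀|) * |s - s₀| := by
    intro s₀ hs₀ s hs y
    have hs₀' : s₀ ∈ Set.Icc (0:ℝ) b := Set.Ioo_subset_Icc_self hs₀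
    set a1 := min s₀ s with ha1
    set b1 := max s₀ s with hb1
    have hsub : Set.Icc a1 b1 ⊆ Set.Icc (0:ℝ) b := by
      intro r hr
      constructor
      · exact le_trans (le_min hs₀'.1 hs.1) hr.1
      · exact le_trans hr.2 (max_le hs₀'.2 hs.2)
    have hsubo : Set.Ioo a1 b1 ⊆ Set.Ioo (0:ℝ) b := by
      intro r hr
      constructor
      · exact lt_of_le_of_lt (le_min hs₀'.1 hs.1) hr.1
      · exact lt_of_lt_of_le hr.2 (max_le hs₀'.2 hs.2)
    have habs : ∀ r ∈ Set.Icc a1 b1, |r - s₀| ≤ |s - s₀| := by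
      intro r hr
      rcases le_total s₀ s with h | h
      · rw [abs_of_nonneg (by simp [ha1, hb1, h] at hr ⊢; linarith [hr.1])]
        rw [abs_of_nonneg (by linarith)]
        simp [ha1, hb1, h] at hr
        linarith [hr.2]
      · rw [abs_of_nonpos (by simp [ha1, hb1, h] at hr ⊢; linarith [hr.2])]
        rw [abs_of_nonpos (by linarith)]
        simp [ha1, hb1, h] at hr
        linarith [hr.1]
    have key := aux_lip (φ := fun r => g r y - r * g' s₀ y) (ψ := fun r => g' r y - g' s₀ y)
      (a := a1) (b := b1)
      (by
        refine ((hcy y).mono hsub).sub ?_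
        exact (continuous_id.mul continuous_const).continuousOn)
      (by
        intro r hr
        exact (hd y r (hsubo hr)).sub (((hasDerivAt_id r).mul_const (g' s₀ y)).congr_deriv
          (by simp))
        )
      (by
        intro r hr
        have := hl r (hsub (Set.Ioo_subset_Icc_self hr)) s₀ hs₀' y
        exact this.trans (mul_le_mul_of_nonneg_left
          (habs r (Set.Ioo_subset_Icc_self hr)) hLip))
      s (by constructor <;> [exact min_le_right _ _; exact le_max_right _ _])
      s₀ (by constructor <;> [exact min_le_left _ _; exact le_max_left _ _])
    calc |g s y - g s₀ y - (s - s₀) * g' s₀ y|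
        = |(g s y - s * g' s₀ y) - (g s₀ y - s₀ * g' s₀ y)| := by ring_nf
      _ ≤ (Lip * |s - s₀|) * |s - s₀| := key
  constructor
  · -- derivative
    intro s₀ hs₀
    have hs₀' : s₀ ∈ Set.Icc (0:ℝ) b := Set.Ioo_subset_Icc_self hs₀
    have hτ₀ : (0:ℝ) < b - s₀ := by linarith [hs₀.2]
    -- F₁
    have hQd := hQ7 (g s₀) (hBg s₀ hs₀') z (b - s₀) hτ₀
    have hinner : HasDerivAt (fun s : ℝ => b - s) (-1) s₀ := by
      simpa using (hasDerivAt_id s₀).const_sub b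
    have hF1 : HasDerivAt (fun s => Q (b - s) (g s₀) z)
        ((G.lap (Q (b - s₀) (g s₀)) z - (2 • ρ) z * Q (b - s₀) (g s₀) z) * (-1)) s₀ := by
      have := hQd.comp s₀ hinner
      exact this
    -- F₂
    have hF2 : HasDerivAt
        (fun s => Q (b - s) (g s - g s₀ - (s - s₀) • g' s₀) z) 0 s₀ := by
      rw [hasDerivAt_iff_tendsto_slope]
      have hIcc : Set.Icc (0:ℝ) b ∈ nhds s₀ := Icc_mem_nhds hs₀.1 hs₀.2
      have hbound : ∀ᶠ s in nhdsWithin s₀ {s₀}ᶜ,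
          ‖slope (fun s => Q (b - s) (g s - g s₀ - (s - s₀) • g' s₀) z) s₀ s‖
            ≤ Real.exp (K * T) * Lip * |s - s₀| := by
        filter_upwards [mem_nhdsWithin_of_mem_nhds hIcc, self_mem_nhdsWithin] with s hs hne
        have hne' : s - s₀ ≠ 0 := sub_ne_zero.mpr hne
        have hQ0 : Q (b - s₀) (g s₀ - g s₀ - (s₀ - s₀) • g' s₀) z = 0 := by
          have : (g s₀ - g s₀ - ((s₀ : ℝ) - s₀) • g' s₀) = (0 : V → ℝ) := by
            simp
          rw [this, aux_map_zero hQ4]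
          rfl
        rw [slope_def_field, hQ0, sub_zero]
        have hb1 : ∀ y, |(g s - g s₀ - (s - s₀) • g' s₀) y| ≤ Lip * |s - s₀| * |s - s₀| := by
          intro y
          have := hE s₀ hs₀ s hs y
          simpa [Pi.sub_apply, Pi.smul_apply, smul_eq_mul] using this
        have hQbnd := aux_Qb G hK hT ⟨hQ1, hQ2, hQ3, hQ4, hQ5, hQ6, hQ7, hQ8⟩ hQnorm
          (by linarith [hs.2] : (0:ℝ) ≤ b - s)
          (by positivity : (0:ℝ) ≤ Lip * |s - s₀| * |s - s₀|) hb1 z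
        rw [Real.norm_eq_abs, abs_div]
        rw [div_le_iff₀ (by positivity : (0:ℝ) < |s - s₀|)]
        calc |Q (b - s) (g s - g s₀ - (s - s₀) • g' s₀) z|
            ≤ Real.exp (K * T) * (Lip * |s - s₀| * |s - s₀|) := hQbnd
          _ = Real.exp (K * T) * Lip * |s - s₀| * |s - s₀| := by ring
      have htend : Filter.Tendsto (fun s : ℝ => Real.exp (K * T) * Lip * |s - s₀|)
          (nhdsWithin s₀ {s₀}ᶜ) (nhds 0) := by
        have hcont : Continuous (fun s : ℝ => Real.exp (K * T) * Lip * |s - s₀|) :=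
          continuous_const.mul ((continuous_sub_right s₀).abs)
        have := (hcont.tendsto s₀).mono_left (nhdsWithin_le_nhds (s := {s₀}ᶜ))
        simpa using this
      exact squeeze_zero_norm' hbound htend
    -- F₃
    have hψc : ContinuousAt (fun s : ℝ => Q (b - s) (g' s₀) z) s₀ := by
      have h1 : ContinuousAt (fun σ : ℝ => Q σ (g' s₀) z) (b - s₀) :=
        (hQ6 (g' s₀) (hBg' s₀ hs₀') z).continuousAt (Ici_mem_nhds hτ₀)
      exact h1.comp ((continuous_const.sub continuous_id).continuousAt)
    have hF3 : HasDerivAt (fun s => (s - s₀) * Q (b - s) (g' s₀) z)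
        (Q (b - s₀) (g' s₀) z) s₀ := by
      rw [hasDerivAt_iff_tendsto_slope]
      have heq : ∀ᶠ s in nhdsWithin s₀ {s₀}ᶜ,
          Q (b - s) (g' s₀) z
            = slope (fun s => (s - s₀) * Q (b - s) (g' s₀) z) s₀ s := by
        filter_upwards [self_mem_nhdsWithin] with s hne
        have hne' : s - s₀ ≠ 0 := sub_ne_zero.mpr hne
        rw [slope_def_field]
        field_simp
        ring
      have := (hψc.tendsto).mono_left (nhdsWithin_le_nhds (s := {s₀}ᶜ))
      have h2 : Filter.Tendsto (fun s : ℝ => Q (b - s) (g' s₀) z)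
          (nhdsWithin s₀ {s₀}ᶜ) (nhds (Q (b - s₀) (g' s₀) z)) := by
        simpa using this
      exact Filter.Tendsto.congr' heq h2
    -- assemble
    have hsplit : (fun s => Q (b - s) (g s) z)
        = fun s => Q (b - s) (g s₀) z
            + Q (b - s) (g s - g s₀ - (s - s₀) • g' s₀) z
            + (s - s₀) * Q (b - s) (g' s₀) z := by
      funext s
      have hfun : g s = g s₀ + ((g s - g s₀ - (s - s₀) • g' s₀) + (s - s₀) • g' s₀) := by
        abel
      rw [hfun, hQ3, hQ3, hQ4]
      simp [Pi.add_apply, Pi.smul_apply, smul_eq_mul]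
      ring
    have hsum := (hF1.add hF2).add hF3
    rw [hsplit]
    have hsum' : HasDerivAt (fun s => Q (b - s) (g s₀) z
            + Q (b - s) (g s - g s₀ - (s - s₀) • g' s₀) z
            + (s - s₀) * Q (b - s) (g' s₀) z) _ s₀ := hsum
    convert hsum' using 1
    ring
  · -- continuity
    intro s' hs'
    have hpart1 : ContinuousWithinAt (fun s => Q (b - s) (g s') z) (Set.Icc 0 b) s' := by
      have houter := hQ6 (g s') (hBg s' hs') z
      have hmap : Set.MapsTo (fun s : ℝ => b - s) (Set.Icc 0 b) (Set.Ici 0) := by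
        intro s hs
        simp only [Set.mem_Ici]
        linarith [hs.2]
      exact (houter.comp ((continuous_const.sub continuous_id).continuousOn) hmap) s' hs'
    have hpart2 : Filter.Tendsto (fun s => Q (b - s) (g s - g s') z)
        (nhdsWithin s' (Set.Icc 0 b)) (nhds 0) := by
      have hbnd : ∀ s ∈ Set.Icc (0:ℝ) b,
          ‖Q (b - s) (g s - g s') z‖ ≤ Real.exp (K * T) * (Mg * |s - s'|) := by
        intro s hs
        have hb1 : ∀ y, |(g s - g s') y| ≤ Mg * |s - s'| := by
          intro y
          simpa [Pi.sub_apply] using hgLip s hs s' hs' y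
        rw [Real.norm_eq_abs]
        exact aux_Qb G hK hT ⟨hQ1, hQ2, hQ3, hQ4, hQ5, hQ6, hQ7, hQ8⟩ hQnorm
          (by linarith [hs.2] : (0:ℝ) ≤ b - s)
          (by positivity : (0:ℝ) ≤ Mg * |s - s'|) hb1 z
      have htend : Filter.Tendsto (fun s : ℝ => Real.exp (K * T) * (Mg * |s - s'|))
          (nhdsWithin s' (Set.Icc 0 b)) (nhds 0) := by
        have hcont : Continuous (fun s : ℝ => Real.exp (K * T) * (Mg * |s - s'|)) :=
          continuous_const.mul (continuous_const.mul ((continuous_sub_right s').abs))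
        have := (hcont.tendsto s').mono_left (nhdsWithin_le_nhds (s := Set.Icc 0 b))
        simpa using this
      refine squeeze_zero_norm' ?_ htend
      filter_upwards [self_mem_nhdsWithin] with s hs
      exact hbnd s hs
    have hsplit2 : (fun s => Q (b - s) (g s) z)
        = fun s => Q (b - s) (g s') z + Q (b - s) (g s - g s') z := by
      funext s
      have h := hQ3 (b - s) (g s') (g s - g s')
      have hfun : g s' + (g s - g s') = g s := by abel
      rw [hfun] at h
      rw [h]
      rfl
    rw [hsplit2]
    refine hpart1.add ?_
    have h0 : (fun s => Q (b - s) (g s - g s') z) s' = 0 := by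
      show Q (b - s') (g s' - g s') z = 0
      have hz : g s' - g s' = (0 : V → ℝ) := by abel
      rw [hz, aux_map_zero hQ4]
      rfl
    unfold ContinuousWithinAt
    rw [h0]
    exact hpart2

end AuxSandwich

section AuxComm
variable {V : Type*} (G : WGraph V)

/-- Commutation of the Schrödinger semigroup with its generator. -/
lemma aux_comm {ρ : V → ℝ} {Q : ℝ → (V → ℝ) → V → ℝ} {K T : ℝ}
    (hK : 0 < K) (hT : 0 < T) (hQ : G.IsSemigroup (2 • ρ) Q)
    (hQnorm : ∀ t, 0 < t → ∀ g : V → ℝ, ∀ C, 0 ≤ C → (∀ x, |g x| ≤ C) →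
      ∀ x, |Q t g x| ≤ Real.exp (K * (T - t)) * C)
    {D Rb : ℝ} (hdeg : ∀ y, G.deg y ≤ D) (hD0 : 0 ≤ D) (hRb : ∀ y, |(2 • ρ) y| ≤ Rb)
    (hRb0 : 0 ≤ Rb)
    {g : V → ℝ} {Cg : ℝ} (hCg0 : 0 ≤ Cg) (hg : ∀ y, |g y| ≤ Cg)
    {τ : ℝ} (hτ : 0 < τ) (z : V) :
    G.lap (Q τ g) z - (2 • ρ) z * Q τ g z
      = Q τ (fun y => G.lap g y - (2 • ρ) y * g y) z := by
  have hQ' := hQ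
  obtain ⟨hQ1, hQ2, hQ3, hQ4, hQ5, hQ6, hQ7, hQ8⟩ := hQ
  have hgB : WGraph.Bdd g := ⟨Cg, hg⟩
  set M2 : ℝ := Real.exp (K * T) * Cg with hM2def
  have hM20 : 0 ≤ M2 := by positivity
  have hM2 : ∀ r : ℝ, 0 ≤ r → ∀ y, |Q r g y| ≤ M2 := fun r hr y =>
    aux_Qb G hK hT hQ' hQnorm hr hCg0 hg y
  set L0 : ℝ := 2 * D + Rb with hL0def
  have hL00 : 0 ≤ L0 := by positivity
  -- generic generator bound
  have hgen : ∀ (v : V → ℝ) (Cv : ℝ), 0 ≤ Cv → (∀ y, |v y| ≤ Cv) →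
      ∀ y, |G.lap v y - (2 • ρ) y * v y| ≤ L0 * Cv := by
    intro v Cv hCv hv y
    have h1 : |G.lap v y| ≤ 2 * D * Cv := by
      refine (aux_lap_abs_le G v Cv hv y).trans ?_
      have := hdeg y
      nlinarith [aux_deg_nonneg G y]
    have h2 : |(2 • ρ) y * v y| ≤ Rb * Cv := by
      rw [abs_mul]
      exact mul_le_mul (hRb y) (hv y) (abs_nonneg _) hRb0
    calc |G.lap v y - (2 • ρ) y * v y| ≤ |G.lap v y| + |(2 • ρ) y * v y| := abs_sub _ _
      _ ≤ 2 * D * Cv + Rb * Cv := add_le_add h1 h2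
      _ = L0 * Cv := by rw [hL0def]; ring
  set M3 : ℝ := L0 * M2 with hM3def
  have hM30 : 0 ≤ M3 := by positivity
  -- the time-varying function r ↦ Q r g and its derivative
  set gv : ℝ → V → ℝ := fun r => Q r g with hgvdef
  set gv' : ℝ → V → ℝ := fun r y => G.lap (Q r g) y - (2 • ρ) y * Q r g y with hgvdef'
  have hbgv : ∀ r : ℝ, 0 ≤ r → ∀ y, |gv r y| ≤ M2 := fun r hr y => hM2 r hr y
  have hbgv' : ∀ r : ℝ, 0 ≤ r → ∀ y, |gv' r y| ≤ M3 := by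
    intro r hr y
    exact hgen (Q r g) M2 hM20 (hM2 r hr) y
  have hdv : ∀ y : V, ∀ r : ℝ, 0 < r → HasDerivAt (fun r' => gv r' y) (gv' r y) r := by
    intro y r hr
    exact hQ7 g hgB y r hr
  have hcv : ∀ y : V, ContinuousOn (fun r => gv r y) (Set.Ici 0) := fun y => hQ6 g hgB y
  -- per-vertex Lipschitz continuity of r ↦ Q r g y
  have hQlip : ∀ (τ' : ℝ), 0 < τ' → ∀ y, ∀ r ∈ Set.Icc (0:ℝ) τ', ∀ r' ∈ Set.Icc (0:ℝ) τ',
      |Q r g y - Q r' g y| ≤ M3 * |r - r'| := by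
    intro τ' hτ' y
    exact aux_lip ((hcv y).mono Set.Icc_subset_Ici_self)
      (fun σ hσ => hdv y σ hσ.1)
      (fun σ hσ => hbgv' σ hσ.1.le y)
  -- Lipschitz continuity of gv' in sup-norm
  have hlv : ∀ r ∈ Set.Icc (0:ℝ) τ, ∀ r' ∈ Set.Icc (0:ℝ) τ, ∀ y,
      |gv' r y - gv' r' y| ≤ (L0 * M3) * |r - r'| := by
    intro r hr r' hr' y
    have hsub : ∀ w, Q r g w - Q r' g w = (fun w => Q r g w - Q r' g w) w := fun w => rfl
    have heq : gv' r y - gv' r' y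
        = G.lap (fun w => Q r g w - Q r' g w) y
          - (2 • ρ) y * ((fun w => Q r g w - Q r' g w) y) := by
      rw [aux_lap_sub]
      simp only [hgvdef']
      ring
    rw [heq]
    have hh := hgen (fun w => Q r g w - Q r' g w) (M3 * |r - r'|)
      (mul_nonneg hM30 (abs_nonneg _)) (fun w => hQlip τ hτ w r hr r' hr') y
    rw [mul_assoc]
    exact hh
  -- apply the sandwich lemma on [0, τ]
  have hSL := aux_sandwich G hK hT hQ' hQnorm hτ gv gv' (max M2 M3) (L0 * M3)
    (le_trans hM20 (le_max_left _ _)) (by positivity)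
    (fun r hr y => (hbgv r hr.1 y).trans (le_max_left _ _))
    (fun r hr y => (hbgv' r hr.1 y).trans (le_max_right _ _))
    (fun y r hr => hdv y r hr.1)
    (fun y => (hcv y).mono Set.Icc_subset_Ici_self)
    hlv z
  -- the sandwiched function is constant
  have hconst : ∀ r ∈ Set.Icc (0:ℝ) τ, Q (τ - r) (Q r g) = Q τ g := by
    intro r hr
    have h := hQ2 (τ - r) r (by linarith [hr.2]) hr.1 g
    rw [sub_add_cancel] at h
    exact h.symm
  have key : ∀ r₀ ∈ Set.Ioo (0:ℝ) τ,
      Q (τ - r₀) (gv' r₀) z = G.lap (Q τ g) z - (2 • ρ) z * Q τ g z := by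
    intro r₀ hr₀
    have hder := hSL.1 r₀ hr₀
    have hconst' : HasDerivAt (fun r => Q (τ - r) (gv r) z) 0 r₀ := by
      have hev : (fun r => Q (τ - r) (gv r) z) =ᶠ[nhds r₀] (fun _ => Q τ g z) := by
        filter_upwards [isOpen_Ioo.mem_nhds hr₀] with r hr
        show Q (τ - r) (Q r g) z = Q τ g z
        rw [hconst r (Set.Ioo_subset_Icc_self hr)]
      exact (hasDerivAt_const r₀ (Q τ g z)).congr_of_eventuallyEq hev
    have huniq := hder.unique hconst'
    have hgvr : gv r₀ = Q r₀ g := rfl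
    rw [hgvr, hconst r₀ (Set.Ioo_subset_Icc_self hr₀)] at huniq
    linarith [huniq]
  -- pass to the limit r₀ → 0⁺
  set u : V → ℝ := fun y => G.lap g y - (2 • ρ) y * g y with hudef
  have huB : ∀ y, |u y| ≤ L0 * Cg := fun y => hgen g Cg hCg0 hg y
  have htend : Filter.Tendsto (fun r₀ => Q (τ - r₀) (gv' r₀) z)
      (nhdsWithin 0 (Set.Ioi 0)) (nhds (Q τ u z)) := by
    have hsplit : ∀ r₀ : ℝ, 0 ≤ r₀ →
        Q (τ - r₀) (gv' r₀) z
          = Q (τ - r₀) (gv' r₀ - u) z + Q (τ - r₀) u z := by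
      intro r₀ _
      have h := hQ3 (τ - r₀) (gv' r₀ - u) u
      have : gv' r₀ - u + u = gv' r₀ := by abel
      rw [this] at h
      rw [h]
      rfl
    have hterm2 : Filter.Tendsto (fun r₀ : ℝ => Q (τ - r₀) u z)
        (nhdsWithin 0 (Set.Ioi 0)) (nhds (Q τ u z)) := by
      have hcu : ContinuousAt (fun σ : ℝ => Q σ u z) τ :=
        (hQ6 u ⟨L0 * Cg, huB⟩ z).continuousAt (Ici_mem_nhds hτ)
      have hin : Filter.Tendsto (fun r₀ : ℝ => τ - r₀) (nhdsWithin 0 (Set.Ioi 0)) (nhds τ) := by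
        have : Filter.Tendsto (fun r₀ : ℝ => τ - r₀) (nhds 0) (nhds (τ - 0)) :=
          (continuous_const.sub continuous_id).tendsto 0
        rw [sub_zero] at this
        exact this.mono_left (nhdsWithin_le_nhds (s := Set.Ioi 0))
      exact hcu.tendsto.comp hin
    have hterm1 : Filter.Tendsto (fun r₀ : ℝ => Q (τ - r₀) (gv' r₀ - u) z)
        (nhdsWithin 0 (Set.Ioi 0)) (nhds 0) := by
      have hbnd : ∀ᶠ r₀ in nhdsWithin 0 (Set.Ioi 0),
          ‖Q (τ - r₀) (gv' r₀ - u) z‖ ≤ Real.exp (K * T) * (L0 * (M3 * r₀)) := by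
        have hIoo : Set.Ioo (0:ℝ) τ ∈ nhdsWithin 0 (Set.Ioi 0) :=
          Ioo_mem_nhdsGT_of_mem (Set.mem_Ico.mpr ⟨le_refl 0, hτ⟩)
        filter_upwards [hIoo] with r₀ hr₀
        have hdiffb : ∀ y, |(gv' r₀ - u) y| ≤ L0 * (M3 * r₀) := by
          intro y
          have hq0 : Q (0:ℝ) g = g := hQ1 g
          have hlip' : ∀ w, |(fun w => Q r₀ g w - g w) w| ≤ M3 * r₀ := by
            intro w
            have h' := hQlip τ hτ w r₀ ⟨hr₀.1.le, hr₀.2.le⟩ 0 ⟨le_refl 0, hτ.le⟩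
            rw [hq0] at h'
            simpa [abs_of_nonneg hr₀.1.le] using h' 
          have heq : (gv' r₀ - u) y
              = G.lap (fun w => Q r₀ g w - g w) y
                - (2 • ρ) y * ((fun w => Q r₀ g w - g w) y) := by
            rw [aux_lap_sub]
            simp only [hgvdef', hudef, Pi.sub_apply]
            ring
          rw [heq]
          exact hgen (fun w => Q r₀ g w - g w) (M3 * r₀)
            (mul_nonneg hM30 hr₀.1.le) hlip' y
        rw [Real.norm_eq_abs]
        exact aux_Qb G hK hT hQ' hQnorm (by linarith [hr₀.2] : (0:ℝ) ≤ τ - r₀)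
          (mul_nonneg hL00 (mul_nonneg hM30 hr₀.1.le)) hdiffb z
      have htb : Filter.Tendsto (fun r₀ : ℝ => Real.exp (K * T) * (L0 * (M3 * r₀)))
          (nhdsWithin 0 (Set.Ioi 0)) (nhds 0) := by
        have hcont : Continuous (fun r₀ : ℝ => Real.exp (K * T) * (L0 * (M3 * r₀))) :=
          continuous_const.mul (continuous_const.mul (continuous_const.mul continuous_id))
        have := (hcont.tendsto 0).mono_left (nhdsWithin_le_nhds (s := Set.Ioi 0))
        simpa using this
      exact squeeze_zero_norm' hbnd htb
    have := hterm1.add hterm2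
    rw [zero_add] at this
    refine this.congr' ?_
    filter_upwards [self_mem_nhdsWithin] with r₀ hr₀
    exact (hsplit r₀ (le_of_lt hr₀)).symm
  have hev : (fun r₀ => Q (τ - r₀) (gv' r₀) z)
      =ᶠ[nhdsWithin 0 (Set.Ioi 0)] (fun _ => G.lap (Q τ g) z - (2 • ρ) z * Q τ g z) := by
    have hIoo : Set.Ioo (0:ℝ) τ ∈ nhdsWithin 0 (Set.Ioi 0) :=
      Ioo_mem_nhdsGT_of_mem (Set.mem_Ico.mpr ⟨le_refl 0, hτ⟩)
    filter_upwards [hIoo] with r₀ hr₀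
    exact key r₀ hr₀
  have hconsttend : Filter.Tendsto (fun r₀ : ℝ => Q (τ - r₀) (gv' r₀) z)
      (nhdsWithin 0 (Set.Ioi 0)) (nhds (G.lap (Q τ g) z - (2 • ρ) z * Q τ g z)) :=
    Filter.Tendsto.congr' hev.symm tendsto_const_nhds
  exact (tendsto_nhds_unique hconsttend htend)

end AuxComm

set_option maxHeartbeats 4000000 in
open WGraph in
theorem gradient_vs_infinity_norm {V : Type*} (G : WGraph V)
    (hD : BddAbove (Set.range G.deg))
    (ρ : V → ℝ) (n : ℝ≥0∞) (hn : n ≠ 0) (hCD : G.CD ρ n)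
    (K T : ℝ) (hK : 0 < K) (hT : 0 < T) (hρK : ∀ x, ρ x ≤ K)
    (P Q : ℝ → (V → ℝ) → V → ℝ)
    (hP : G.IsSemigroup 0 P) (hQ : G.IsSemigroup (2 • ρ) Q)
    (hQnorm : ∀ t, 0 < t → ∀ g : V → ℝ, ∀ C, 0 ≤ C → (∀ x, |g x| ≤ C) →
      ∀ x, |Q t g x| ≤ Real.exp (K * (T - t)) * C)
    (f : V → ℝ) (hf : Bdd f) (t : ℝ) (ht : 0 < t) (x : V) :
    G.gamma (P t f) x ≤ K * Real.exp (K * T) / Real.sinh (K * t) * (⨆ y, |f y|) ^ 2 ∧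
    K * Real.exp (K * T) / Real.sinh (K * t) * (⨆ y, |f y|) ^ 2
      ≤ Real.exp (K * T) / t * (⨆ y, |f y|) ^ 2 := by
  classical
  -- the sup norm of f
  set C : ℝ := ⨆ y, |f y| with hCdef
  obtain ⟨Cf, hCf⟩ := hf
  have hbddA : BddAbove (Set.range fun y => |f y|) := by
    refine ⟨Cf, ?_⟩
    rintro _ ⟨y, rfl⟩
    exact hCf y
  have hC : ∀ y, |f y| ≤ C := fun y => le_ciSup hbddA y
  have hC0 : 0 ≤ C := (abs_nonneg (f x)).trans (hC x)
  have hf' : Bdd f := ⟨Cf, hCf⟩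
  -- degree bound
  obtain ⟨D, hDub⟩ := hD
  have hdeg : ∀ y, G.deg y ≤ D := fun y => hDub (Set.mem_range_self y)
  have hD0 : 0 ≤ D := (aux_deg_nonneg G x).trans (hdeg x)
  -- curvature bounds
  have hρlo : ∀ y, (K - D) / 2 ≤ ρ y := by
    intro y
    refine le_trans ?_ (aux_rho_lb G hK hT hQ hQnorm y)
    have := hdeg y
    linarith
  have h2ρ : ∀ y : V, (2 • ρ) y = 2 * ρ y := fun y => by
    simp [two_smul, two_mul]
  have hRb : ∀ y, |(2 • ρ) y| ≤ 2 * (K + D) := by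
    intro y
    rw [h2ρ, abs_mul, abs_of_nonneg (by norm_num : (0:ℝ) ≤ 2)]
    have h1 : |ρ y| ≤ K + D := by
      rw [abs_le]
      constructor
      · have := hρlo y; linarith
      · have := hρK y; linarith
    linarith
  have hRb0 : (0:ℝ) ≤ 2 * (K + D) := by linarith
  -- uniform bound on P s f over [0, t]
  obtain ⟨hP1, hP2, hP3, hP4, hP5, hP6, hP7, hP8⟩ := hP
  have hP' : G.IsSemigroup 0 P := ⟨hP1, hP2, hP3, hP4, hP5, hP6, hP7, hP8⟩
  set vp : V → ℝ := fun y => C + f y with hvp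
  set vm : V → ℝ := fun y => C - f y with hvm
  have hvpB : Bdd vp := ⟨2 * C, fun y => by
    have := abs_le.mp (hC y)
    rw [hvp, abs_le]; constructor <;> [skip; skip] <;> simp <;> linarith [this.1, this.2]⟩
  have hvmB : Bdd vm := ⟨2 * C, fun y => by
    have := abs_le.mp (hC y)
    rw [hvm, abs_le]; constructor <;> [skip; skip] <;> simp <;> linarith [this.1, this.2]⟩
  have hvp0 : ∀ y, 0 ≤ vp y := fun y => by
    have := abs_le.mp (hC y); simp [hvp]; linarith [this.1]
  have hvm0 : ∀ y, 0 ≤ vm y := fun y => by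
    have := abs_le.mp (hC y); simp [hvm]; linarith [this.2]
  obtain ⟨Bp, hBp⟩ := hP5 vp hvpB t ht.le
  obtain ⟨Bm, hBm⟩ := hP5 vm hvmB t ht.le
  set B : ℝ := max Bp Bm with hBdef
  have hB0 : 0 ≤ B := le_trans (abs_nonneg _) (le_trans (hBp x) (le_max_left _ _))
  have hup : ∀ (v : V → ℝ), Bdd v → (∀ y, 0 ≤ v y) → (∀ y, |P t v y| ≤ B) →
      ∀ s ∈ Set.Icc (0:ℝ) t, ∀ y, 0 ≤ P s v y ∧ P s v y ≤ Real.exp (D * t) * B := by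
    intro v hvB hv0 hvt s hs y
    have hpos : 0 ≤ P s v y := hP8 v hvB hv0 s hs.1 y
    refine ⟨hpos, ?_⟩
    have hgr := aux_gronwall G hP' hvB hv0 y hs.1 hs.2
    simp only [Pi.zero_apply, add_zero] at hgr
    have he1 : (1:ℝ) ≤ Real.exp (G.deg y * s) :=
      Real.one_le_exp_iff.mpr (mul_nonneg (aux_deg_nonneg G y) hs.1)
    have he2 : Real.exp (G.deg y * t) ≤ Real.exp (D * t) :=
      Real.exp_le_exp.mpr (mul_le_mul_of_nonneg_right (hdeg y) ht.le)
    have hptv : 0 ≤ P t v y := hP8 v hvB hv0 t ht.le y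
    have hptb : P t v y ≤ B := (le_abs_self _).trans (hvt y)
    calc P s v y = 1 * P s v y := (one_mul _).symm
      _ ≤ Real.exp (G.deg y * s) * P s v y := mul_le_mul_of_nonneg_right he1 hpos
      _ ≤ Real.exp (G.deg y * t) * P t v y := hgr
      _ ≤ Real.exp (D * t) * B := by nlinarith [Real.exp_pos (G.deg y * t)]
  set M0 : ℝ := Real.exp (D * t) * B with hM0def
  have hM00 : 0 ≤ M0 := by positivity
  have hM0 : ∀ s ∈ Set.Icc (0:ℝ) t, ∀ y, |P s f y| ≤ M0 := by
    intro s hs y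
    have hp := hup vp hvpB hvp0 (fun y => (hBp y).trans (le_max_left _ _)) s hs y
    have hm := hup vm hvmB hvm0 (fun y => (hBm y).trans (le_max_right _ _)) s hs y
    have harg : vp - vm = (2:ℝ) • f := by
      funext y'
      simp [hvp, hvm, Pi.sub_apply, Pi.smul_apply, smul_eq_mul]
      ring
    have hdiff : P s vp - P s vm = (2:ℝ) • P s f := by
      rw [← hP4 s 2 f, ← harg, aux_map_sub hP3 hP4]
    have h2 : P s vp y - P s vm y = 2 * P s f y := by
      have := congrFun hdiff y
      simpa [Pi.sub_apply, Pi.smul_apply, smul_eq_mul] using this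
    rw [abs_le]
    constructor <;> nlinarith [hp.1, hp.2, hm.1, hm.2]
  -- per-vertex derivative and continuity of the heat semigroup
  have hPd : ∀ y : V, ∀ s : ℝ, 0 < s → HasDerivAt (fun r => P r f y) (G.lap (P s f) y) s := by
    intro y s hs
    have := hP7 f hf' y s hs
    simpa using this
  have hPc : ∀ y : V, ContinuousOn (fun s => P s f y) (Set.Icc 0 t) :=
    fun y => (hP6 f hf' y).mono Set.Icc_subset_Ici_self
  have hlapb : ∀ s ∈ Set.Icc (0:ℝ) t, ∀ y, |G.lap (P s f) y| ≤ 2 * D * M0 := by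
    intro s hs y
    refine (aux_lap_abs_le G (P s f) M0 (hM0 s hs) y).trans ?_
    nlinarith [hdeg y, aux_deg_nonneg G y]
  have hPlip : ∀ y : V, ∀ s ∈ Set.Icc (0:ℝ) t, ∀ s' ∈ Set.Icc (0:ℝ) t,
      |P s f y - P s' f y| ≤ (2 * D * M0) * |s - s'| := by
    intro y
    exact aux_lip (hPc y) (fun σ hσ => hPd y σ hσ.1)
      (fun σ hσ => hlapb σ (Set.Ioo_subset_Icc_self hσ) y)
  have hlapdiff : ∀ s ∈ Set.Icc (0:ℝ) t, ∀ s' ∈ Set.Icc (0:ℝ) t, ∀ y,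
      |G.lap (P s f) y - G.lap (P s' f) y|
        ≤ 2 * D * ((2 * D * M0) * |s - s'|) := by
    intro s hs s' hs' y
    rw [← aux_lap_sub]
    refine (aux_lap_abs_le G _ ((2 * D * M0) * |s - s'|)
      (fun w => hPlip w s hs s' hs') y).trans ?_
    have h1 : (0:ℝ) ≤ (2 * D * M0) * |s - s'| := by positivity
    nlinarith [hdeg y, aux_deg_nonneg G y]
  -- the interpolating functions
  set gam : ℝ → V → ℝ := fun s => G.gamma (P s f) with hgamdef
  set gam' : ℝ → V → ℝ := fun s y => 2 * G.gammaB (P s f) (G.lap (P s f)) y with hgamdef'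
  set sqf : ℝ → V → ℝ := fun s => P s f * P s f with hsqdef
  set sqf' : ℝ → V → ℝ := fun s y => 2 * P s f y * G.lap (P s f) y with hsqdef'
  -- bounds
  have hgamb : ∀ s ∈ Set.Icc (0:ℝ) t, ∀ y, |gam s y| ≤ 2 * D * (M0 * M0) := by
    intro s hs y
    refine (aux_gammaB_abs_le G _ _ M0 M0 (hM0 s hs) (hM0 s hs) y).trans ?_
    nlinarith [hdeg y, aux_deg_nonneg G y, mul_nonneg hM00 hM00]
  have hgamb' : ∀ s ∈ Set.Icc (0:ℝ) t, ∀ y,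
      |gam' s y| ≤ 2 * (2 * D * (M0 * (2 * D * M0))) := by
    intro s hs y
    rw [hgamdef']
    simp only [abs_mul, abs_of_nonneg (by norm_num : (0:ℝ) ≤ 2)]
    have := aux_gammaB_abs_le G (P s f) (G.lap (P s f)) M0 (2 * D * M0)
      (hM0 s hs) (fun w => hlapb s hs w) y
    have h2 : |G.gammaB (P s f) (G.lap (P s f)) y| ≤ 2 * D * (M0 * (2 * D * M0)) := by
      refine this.trans ?_
      nlinarith [hdeg y, aux_deg_nonneg G y, mul_nonneg hM00 (by positivity : (0:ℝ) ≤ 2*D*M0)]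
    linarith
  have hsqb : ∀ s ∈ Set.Icc (0:ℝ) t, ∀ y, |sqf s y| ≤ M0 * M0 := by
    intro s hs y
    rw [hsqdef]
    simp only [Pi.mul_apply, abs_mul]
    exact mul_le_mul (hM0 s hs y) (hM0 s hs y) (abs_nonneg _) hM00
  have hsqb' : ∀ s ∈ Set.Icc (0:ℝ) t, ∀ y, |sqf' s y| ≤ 2 * M0 * (2 * D * M0) := by
    intro s hs y
    rw [hsqdef']
    rw [abs_mul, abs_mul, abs_of_nonneg (by norm_num : (0:ℝ) ≤ 2)]
    have h1 := hM0 s hs y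
    have h2 := hlapb s hs y
    have : |P s f y| * |G.lap (P s f) y| ≤ M0 * (2 * D * M0) :=
      mul_le_mul h1 h2 (abs_nonneg _) hM00
    nlinarith [abs_nonneg (P s f y), abs_nonneg (G.lap (P s f) y)]
  -- Lipschitz bounds for the derivatives
  have hgamlip : ∀ s ∈ Set.Icc (0:ℝ) t, ∀ s' ∈ Set.Icc (0:ℝ) t, ∀ y,
      |gam' s y - gam' s' y|
        ≤ (2 * (2 * D * ((2 * D * M0) * (2 * D * M0)) + 2 * D * (M0 * (2 * D * (2 * D * M0)))))
          * |s - s'| := by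
    intro s hs s' hs' y
    have hsplit := aux_gammaB_sub G (P s f) (P s' f) (G.lap (P s f)) (G.lap (P s' f)) y
    have h1 : |G.gammaB (fun w => P s f w - P s' f w) (G.lap (P s f)) y|
        ≤ 2 * D * (((2 * D * M0) * |s - s'|) * (2 * D * M0)) := by
      refine (aux_gammaB_abs_le G _ _ ((2 * D * M0) * |s - s'|) (2 * D * M0)
        (fun w => hPlip w s hs s' hs') (fun w => hlapb s hs w) y).trans ?_
      have hnn : (0:ℝ) ≤ ((2 * D * M0) * |s - s'|) * (2 * D * M0) := by positivity
      nlinarith [hdeg y, aux_deg_nonneg G y]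
    have h2 : |G.gammaB (P s' f) (fun w => G.lap (P s f) w - G.lap (P s' f) w) y|
        ≤ 2 * D * (M0 * (2 * D * ((2 * D * M0) * |s - s'|))) := by
      refine (aux_gammaB_abs_le G _ _ M0 (2 * D * ((2 * D * M0) * |s - s'|))
        (hM0 s' hs') (fun w => by
          have := hlapdiff s hs s' hs' w
          calc |G.lap (P s f) w - G.lap (P s' f) w| ≤ 2 * D * ((2 * D * M0) * |s - s'|) := this) y).trans ?_
      have hnn : (0:ℝ) ≤ M0 * (2 * D * ((2 * D * M0) * |s - s'|)) := by positivity
      nlinarith [hdeg y, aux_deg_nonneg G y]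
    have heq : gam' s y - gam' s' y
        = 2 * (G.gammaB (fun w => P s f w - P s' f w) (G.lap (P s f)) y
            + G.gammaB (P s' f) (fun w => G.lap (P s f) w - G.lap (P s' f) w) y) := by
      rw [hgamdef']
      simp only []
      rw [← hsplit]
      ring
    rw [heq]
    calc |2 * (G.gammaB (fun w => P s f w - P s' f w) (G.lap (P s f)) y
            + G.gammaB (P s' f) (fun w => G.lap (P s f) w - G.lap (P s' f) w) y)|
        ≤ 2 * (|G.gammaB (fun w => P s f w - P s' f w) (G.lap (P s f)) y|
            + |G.gammaB (P s' f) (fun w => G.lap (P s f) w - G.lap (P s' f) w) y|) := by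
          rw [abs_mul, abs_of_nonneg (by norm_num : (0:ℝ) ≤ 2)]
          have := abs_add_le (G.gammaB (fun w => P s f w - P s' f w) (G.lap (P s f)) y)
            (G.gammaB (P s' f) (fun w => G.lap (P s f) w - G.lap (P s' f) w) y)
          linarith
      _ ≤ (2 * (2 * D * ((2 * D * M0) * (2 * D * M0)) + 2 * D * (M0 * (2 * D * (2 * D * M0)))))
            * |s - s'| := by
          have hr : (2:ℝ) * (2 * D * (((2 * D * M0) * |s - s'|) * (2 * D * M0))
              + 2 * D * (M0 * (2 * D * ((2 * D * M0) * |s - s'|))))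
            = (2 * (2 * D * ((2 * D * M0) * (2 * D * M0))
              + 2 * D * (M0 * (2 * D * (2 * D * M0))))) * |s - s'| := by ring
          linarith [h1, h2, hr]
  have hsqlip : ∀ s ∈ Set.Icc (0:ℝ) t, ∀ s' ∈ Set.Icc (0:ℝ) t, ∀ y,
      |sqf' s y - sqf' s' y|
        ≤ (2 * ((2 * D * M0) * (2 * D * M0)) + 2 * (M0 * (2 * D * (2 * D * M0)))) * |s - s'| := by
    intro s hs s' hs' y
    have heq : sqf' s y - sqf' s' y
        = 2 * ((P s f y - P s' f y) * G.lap (P s f) y)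
          + 2 * (P s' f y * (G.lap (P s f) y - G.lap (P s' f) y)) := by
      rw [hsqdef']; ring
    rw [heq]
    have h1 : |(P s f y - P s' f y) * G.lap (P s f) y| ≤ ((2*D*M0) * |s - s'|) * (2*D*M0) := by
      rw [abs_mul]
      have e3 : (0:ℝ) ≤ (2*D*M0) * |s - s'| :=
        mul_nonneg (mul_nonneg (mul_nonneg zero_le_two hD0) hM00) (abs_nonneg _)
      exact mul_le_mul (hPlip y s hs s' hs') (hlapb s hs y) (abs_nonneg _) e3
    have h2 : |P s' f y * (G.lap (P s f) y - G.lap (P s' f) y)|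
        ≤ M0 * (2 * D * ((2*D*M0) * |s - s'|)) := by
      rw [abs_mul]
      exact mul_le_mul (hM0 s' hs' y) (hlapdiff s hs s' hs' y) (abs_nonneg _) hM00
    calc |2 * ((P s f y - P s' f y) * G.lap (P s f) y)
          + 2 * (P s' f y * (G.lap (P s f) y - G.lap (P s' f) y))|
        ≤ 2 * |(P s f y - P s' f y) * G.lap (P s f) y|
          + 2 * |P s' f y * (G.lap (P s f) y - G.lap (P s' f) y)| := by
          have := abs_add_le (2 * ((P s f y - P s' f y) * G.lap (P s f) y))
            (2 * (P s' f y * (G.lap (P s f) y - G.lap (P s' f) y)))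
          rw [abs_mul (2:ℝ) ((P s f y - P s' f y) * G.lap (P s f) y),
            abs_mul (2:ℝ) (P s' f y * (G.lap (P s f) y - G.lap (P s' f) y)),
            abs_of_nonneg (by norm_num : (0:ℝ) ≤ 2)] at this
          linarith
      _ ≤ (2 * ((2 * D * M0) * (2 * D * M0)) + 2 * (M0 * (2 * D * (2 * D * M0)))) * |s - s'| := by
          have hr : (2:ℝ) * (((2*D*M0) * |s - s'|) * (2*D*M0))
              + 2 * (M0 * (2 * D * ((2*D*M0) * |s - s'|)))
            = (2 * ((2 * D * M0) * (2 * D * M0)) + 2 * (M0 * (2 * D * (2 * D * M0)))) * |s - s'| := by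
            ring
          linarith [h1, h2, hr]
  -- continuity per vertex
  have hgamc : ∀ y : V, ContinuousOn (fun s => gam s y) (Set.Icc 0 t) := by
    intro y
    have heq : (fun s => gam s y)
        = fun s => 2⁻¹ * ∑ w ∈ (G.locFin y).toFinset, G.q y w * (P s f w - P s f y)^2 := by
      funext s
      simp only [hgamdef]
      exact aux_gamma_eq G (P s f) y
    rw [heq]
    refine continuousOn_const.mul ?_
    refine continuousOn_finset_sum _ fun w _ => ?_
    exact continuousOn_const.mul (((hPc w).sub (hPc y)).pow 2)
  have hsqc : ∀ y : V, ContinuousOn (fun s => sqf s y) (Set.Icc 0 t) := by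
    intro y
    have heq : (fun s => sqf s y) = fun s => P s f y * P s f y := by
      funext s
      simp only [hsqdef, Pi.mul_apply]
    rw [heq]
    exact (hPc y).mul (hPc y)
  -- derivatives per vertex
  have hgamd : ∀ y : V, ∀ s₀ ∈ Set.Ioo (0:ℝ) t,
      HasDerivAt (fun s => gam s y) (gam' s₀ y) s₀ := by
    intro y s₀ hs₀
    have heq : (fun s => gam s y)
        = fun s => 2⁻¹ * ∑ w ∈ (G.locFin y).toFinset, G.q y w * (P s f w - P s f y)^2 := by
      funext s
      simp only [hgamdef]
      exact aux_gamma_eq G (P s f) y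
    have hsum := HasDerivAt.fun_sum (x := s₀) (u := (G.locFin y).toFinset)
      (fun w (_ : w ∈ (G.locFin y).toFinset) =>
        (((hPd w s₀ hs₀.1).sub (hPd y s₀ hs₀.1)).pow 2).const_mul (G.q y w))
    have hval : gam' s₀ y = 2⁻¹ * ∑ w ∈ (G.locFin y).toFinset,
        G.q y w * (((2:ℕ):ℝ) * (P s₀ f w - P s₀ f y) ^ (2-1)
          * (G.lap (P s₀ f) w - G.lap (P s₀ f) y)) := by
      simp only [hgamdef']
      rw [aux_gammaB_eq, Finset.mul_sum, Finset.mul_sum, Finset.mul_sum]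
      refine Finset.sum_congr rfl fun w _ => ?_
      push_cast
      ring
    rw [heq, hval]
    exact hsum.const_mul (2⁻¹ : ℝ)
  have hsqd : ∀ y : V, ∀ s₀ ∈ Set.Ioo (0:ℝ) t,
      HasDerivAt (fun s => sqf s y) (sqf' s₀ y) s₀ := by
    intro y s₀ hs₀
    have h := (hPd y s₀ hs₀.1).mul (hPd y s₀ hs₀.1)
    have heq : (fun s => sqf s y) = fun s => P s f y * P s f y := by
      funext s
      simp only [hsqdef, Pi.mul_apply]
    rw [heq]
    have h' : HasDerivAt (fun s => P s f y * P s f y) _ s₀ := h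
    convert h' using 1
    simp only [hsqdef']
    ring
  -- constants for the sandwich lemma
  have h1nn : (0:ℝ) ≤ 2 * D * M0 := mul_nonneg (mul_nonneg zero_le_two hD0) hM00
  set Mγ : ℝ := max (2 * D * (M0 * M0)) (2 * (2 * D * (M0 * (2 * D * M0)))) with hMγdef
  have hMγ0 : 0 ≤ Mγ := le_trans
    (mul_nonneg (mul_nonneg zero_le_two hD0) (mul_nonneg hM00 hM00)) (le_max_left _ _)
  set Lγ : ℝ := 2 * (2 * D * ((2 * D * M0) * (2 * D * M0))
    + 2 * D * (M0 * (2 * D * (2 * D * M0)))) with hLγdef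
  have hLγ0 : 0 ≤ Lγ := mul_nonneg zero_le_two (add_nonneg
    (mul_nonneg (mul_nonneg zero_le_two hD0) (mul_nonneg h1nn h1nn))
    (mul_nonneg (mul_nonneg zero_le_two hD0)
      (mul_nonneg hM00 (mul_nonneg (mul_nonneg zero_le_two hD0) h1nn))))
  set Msq : ℝ := max (M0 * M0) (2 * M0 * (2 * D * M0)) with hMsqdef
  have hMsq0 : 0 ≤ Msq := le_trans (mul_nonneg hM00 hM00) (le_max_left _ _)
  set Lsq : ℝ := 2 * ((2 * D * M0) * (2 * D * M0))
    + 2 * (M0 * (2 * D * (2 * D * M0))) with hLsqdef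
  have hLsq0 : 0 ≤ Lsq := add_nonneg
    (mul_nonneg zero_le_two (mul_nonneg h1nn h1nn))
    (mul_nonneg zero_le_two
      (mul_nonneg hM00 (mul_nonneg (mul_nonneg zero_le_two hD0) h1nn)))
  -- sandwich lemma applications
  have hSLγ := aux_sandwich G hK hT hQ hQnorm ht gam gam' Mγ Lγ hMγ0 hLγ0
    (fun s hs y => (hgamb s hs y).trans (le_max_left _ _))
    (fun s hs y => (hgamb' s hs y).trans (le_max_right _ _))
    (fun y s hs => hgamd y s hs) hgamc hgamlip x
  have hSLsq := aux_sandwich G hK hT hQ hQnorm ht sqf sqf' Msq Lsq hMsq0 hLsq0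
    (fun s hs y => (hsqb s hs y).trans (le_max_left _ _))
    (fun s hs y => (hsqb' s hs y).trans (le_max_right _ _))
    (fun y s hs => hsqd y s hs) hsqc hsqlip x
  -- components of hQ (keep hQ itself for lemma calls)
  have hQc := hQ
  obtain ⟨hQ1, hQ2, hQ3, hQ4, hQ5, hQ6, hQ7, hQ8⟩ := hQc
  -- derivative of Φ is nonpositive
  have hΦd : ∀ s₀ ∈ Set.Ioo (0:ℝ) t,
      (2 • ρ) x * Q (t - s₀) (gam s₀) x - G.lap (Q (t - s₀) (gam s₀)) x
        + Q (t - s₀) (gam' s₀) x ≤ 0 := by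
    intro s₀ hs₀
    have hτ : 0 < t - s₀ := by linarith [hs₀.2]
    have hs₀' : s₀ ∈ Set.Icc (0:ℝ) t := Set.Ioo_subset_Icc_self hs₀
    have hcomm := aux_comm G hK hT hQ hQnorm hdeg hD0 hRb hRb0
      (mul_nonneg (mul_nonneg zero_le_two hD0) (mul_nonneg hM00 hM00))
      (hgamb s₀ hs₀') hτ x
    set w1 : V → ℝ := fun y => G.lap (gam s₀) y - (2 • ρ) y * gam s₀ y with hw1def
    have hsub : Q (t - s₀) (gam' s₀ - w1) x
        = Q (t - s₀) (gam' s₀) x - Q (t - s₀) w1 x := by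
      rw [aux_map_sub hQ3 hQ4]
      rfl
    have hle : ∀ y, (gam' s₀ - w1) y ≤ (0 : V → ℝ) y := by
      intro y
      have hcd := hCD (P s₀ f) ⟨M0, hM0 s₀ hs₀'⟩ y
      have hnn : 0 ≤ (n⁻¹).toReal * (G.lap (P s₀ f) y)^2 :=
        mul_nonneg ENNReal.toReal_nonneg (sq_nonneg _)
      have hcd2 : ρ y * G.gamma (P s₀ f) y ≤ G.gamma2 (P s₀ f) y := by linarith
      have heq : (gam' s₀ - w1) y
          = -2 * G.gamma2 (P s₀ f) y + 2 * ρ y * G.gamma (P s₀ f) y := by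
        simp only [Pi.sub_apply, hw1def, hgamdef', hgamdef, h2ρ]
        simp only [WGraph.gamma2]
        ring
      rw [heq]
      simp only [Pi.zero_apply]
      linarith
    have hw1B : Bdd w1 := by
      refine ⟨2 * D * (2 * D * (M0 * M0)) + 2 * (K + D) * (2 * D * (M0 * M0)), fun y => ?_⟩
      have hnn : (0:ℝ) ≤ 2*D*(M0*M0) :=
        mul_nonneg (mul_nonneg zero_le_two hD0) (mul_nonneg hM00 hM00)
      have hl : |G.lap (gam s₀) y| ≤ 2 * D * (2 * D * (M0 * M0)) := by
        refine (aux_lap_abs_le G (gam s₀) (2 * D * (M0 * M0)) (hgamb s₀ hs₀') y).trans ?_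
        nlinarith [hdeg y, aux_deg_nonneg G y]
      have hr : |(2 • ρ) y * gam s₀ y| ≤ 2 * (K + D) * (2 * D * (M0 * M0)) := by
        rw [abs_mul]
        exact mul_le_mul (hRb y) (hgamb s₀ hs₀' y) (abs_nonneg _) hRb0
      simp only [hw1def]
      calc |G.lap (gam s₀) y - (2 • ρ) y * gam s₀ y|
          ≤ |G.lap (gam s₀) y| + |(2 • ρ) y * gam s₀ y| := abs_sub _ _
        _ ≤ _ := add_le_add hl hr
    have hQle : Q (t - s₀) (gam' s₀ - w1) x ≤ 0 := by
      have h0 : Q (t - s₀) (0 : V → ℝ) x = 0 := by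
        rw [aux_map_zero hQ4]
        rfl
      have hm := aux_mono G hQ (aux_bdd_sub ⟨_, hgamb' s₀ hs₀'⟩ hw1B)
        ⟨0, fun y => by simp⟩ hle hτ.le x
      rw [h0] at hm
      exact hm
    have hkey : (2 • ρ) x * Q (t - s₀) (gam s₀) x - G.lap (Q (t - s₀) (gam s₀)) x
        + Q (t - s₀) (gam' s₀) x = Q (t - s₀) (gam' s₀ - w1) x := by
      rw [hsub, ← hcomm]
      ring
    linarith [hQle, hkey.le, hkey.ge]
  have hΦanti : AntitoneOn (fun s => Q (t - s) (gam s) x) (Set.Icc 0 t) := by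
    refine antitoneOn_of_deriv_nonpos (convex_Icc 0 t) hSLγ.2 ?_ ?_
    · intro s hs
      rw [interior_Icc] at hs
      exact (hSLγ.1 s hs).differentiableAt.differentiableWithinAt
    · intro s hs
      rw [interior_Icc] at hs
      rw [(hSLγ.1 s hs).deriv]
      exact hΦd s hs
  have hΦlow : ∀ s ∈ Set.Icc (0:ℝ) t, G.gamma (P t f) x ≤ Q (t - s) (gam s) x := by
    intro s hs
    have ht' : t ∈ Set.Icc (0:ℝ) t := ⟨ht.le, le_refl t⟩
    have h := hΦanti hs ht' hs.2
    have hQt : Q (t - t) (gam t) x = G.gamma (P t f) x := by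
      rw [sub_self]
      have h0 := congrFun (hQ1 (gam t)) x
      rw [h0]
    simp only [] at h
    rw [hQt] at h
    exact h
  set A : ℝ := G.gamma (P t f) x with hAdef
  have hA0 : 0 ≤ A := aux_gamma_nonneg G (P t f) x
  -- derivative bound for H
  have hHd : ∀ s₀ ∈ Set.Ioo (0:ℝ) t,
      (2 • ρ) x * Q (t - s₀) (sqf s₀) x - G.lap (Q (t - s₀) (sqf s₀)) x
        + Q (t - s₀) (sqf' s₀) x
      ≤ 2 * K * Q (t - s₀) (sqf s₀) x - 2 * A := by
    intro s₀ hs₀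
    have hτ : 0 < t - s₀ := by linarith [hs₀.2]
    have hs₀' : s₀ ∈ Set.Icc (0:ℝ) t := Set.Ioo_subset_Icc_self hs₀
    have hcomm := aux_comm G hK hT hQ hQnorm hdeg hD0 hRb hRb0
      (mul_nonneg hM00 hM00) (hsqb s₀ hs₀') hτ x
    set w2 : V → ℝ := fun y => G.lap (sqf s₀) y - (2 • ρ) y * sqf s₀ y with hw2def
    set w3 : V → ℝ := (-2 : ℝ) • gam s₀ + (2 * K) • sqf s₀ with hw3def
    have hsub : Q (t - s₀) (sqf' s₀ - w2) x
        = Q (t - s₀) (sqf' s₀) x - Q (t - s₀) w2 x := by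
      rw [aux_map_sub hQ3 hQ4]
      rfl
    have hle : ∀ y, (sqf' s₀ - w2) y ≤ w3 y := by
      intro y
      have hsq0 : 0 ≤ sqf s₀ y := by
        simp only [hsqdef, Pi.mul_apply]
        exact mul_self_nonneg _
      have heq : (sqf' s₀ - w2) y = -2 * gam s₀ y + 2 * ρ y * sqf s₀ y := by
        simp only [Pi.sub_apply, hw2def, hsqdef', hsqdef, hgamdef, h2ρ, Pi.mul_apply]
        simp only [WGraph.gamma, WGraph.gammaB, Pi.mul_apply]
        ring
      have hw3y : w3 y = -2 * gam s₀ y + 2 * K * sqf s₀ y := by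
        simp only [hw3def, Pi.add_apply, Pi.smul_apply, smul_eq_mul]
      rw [heq, hw3y]
      nlinarith [hρK y, hsq0]
    have hw2B : Bdd w2 := by
      refine ⟨2 * D * (M0*M0) + 2*(K+D)*(M0*M0), fun y => ?_⟩
      have hnn : (0:ℝ) ≤ M0*M0 := mul_nonneg hM00 hM00
      have hl : |G.lap (sqf s₀) y| ≤ 2 * D * (M0*M0) := by
        refine (aux_lap_abs_le G (sqf s₀) (M0*M0) (hsqb s₀ hs₀') y).trans ?_
        nlinarith [hdeg y, aux_deg_nonneg G y]
      have hr : |(2 • ρ) y * sqf s₀ y| ≤ 2*(K+D)*(M0*M0) := by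
        rw [abs_mul]
        exact mul_le_mul (hRb y) (hsqb s₀ hs₀' y) (abs_nonneg _) hRb0
      simp only [hw2def]
      calc |G.lap (sqf s₀) y - (2 • ρ) y * sqf s₀ y|
          ≤ |G.lap (sqf s₀) y| + |(2 • ρ) y * sqf s₀ y| := abs_sub _ _
        _ ≤ _ := add_le_add hl hr
    have hw3B : Bdd w3 := by
      refine ⟨2 * (2*D*(M0*M0)) + 2*K*(M0*M0), fun y => ?_⟩
      have h1 : |(-2:ℝ) * gam s₀ y| ≤ 2 * (2*D*(M0*M0)) := by
        rw [abs_mul]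
        have he2 : |(-2:ℝ)| = 2 := by norm_num
        rw [he2]
        exact mul_le_mul_of_nonneg_left (hgamb s₀ hs₀' y) zero_le_two
      have h2 : |(2*K) * sqf s₀ y| ≤ 2*K*(M0*M0) := by
        rw [abs_mul]
        have he3 : |2*K| = 2*K := abs_of_nonneg (by linarith)
        rw [he3]
        exact mul_le_mul_of_nonneg_left (hsqb s₀ hs₀' y) (by linarith)
      simp only [hw3def, Pi.add_apply, Pi.smul_apply, smul_eq_mul]
      calc |(-2:ℝ) * gam s₀ y + (2*K) * sqf s₀ y|
          ≤ |(-2:ℝ) * gam s₀ y| + |(2*K) * sqf s₀ y| := abs_add_le _ _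
        _ ≤ _ := add_le_add h1 h2
    have hQle : Q (t - s₀) (sqf' s₀ - w2) x ≤ Q (t - s₀) w3 x :=
      aux_mono G hQ (aux_bdd_sub ⟨_, hsqb' s₀ hs₀'⟩ hw2B) hw3B hle hτ.le x
    have hQw3 : Q (t - s₀) w3 x
        = -2 * Q (t - s₀) (gam s₀) x + 2*K*Q (t - s₀) (sqf s₀) x := by
      have h := hQ3 (t - s₀) ((-2 : ℝ) • gam s₀) ((2*K) • sqf s₀)
      rw [hQ4, hQ4] at h
      calc Q (t - s₀) w3 x
          = Q (t - s₀) ((-2 : ℝ) • gam s₀ + (2*K) • sqf s₀) x := by rw [hw3def]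
        _ = ((-2 : ℝ) • Q (t - s₀) (gam s₀) + (2*K) • Q (t - s₀) (sqf s₀)) x := by rw [h]
        _ = -2 * Q (t - s₀) (gam s₀) x + 2*K*Q (t - s₀) (sqf s₀) x := by
            simp [Pi.add_apply, Pi.smul_apply, smul_eq_mul]
    have hkey : (2 • ρ) x * Q (t - s₀) (sqf s₀) x - G.lap (Q (t - s₀) (sqf s₀)) x
        + Q (t - s₀) (sqf' s₀) x = Q (t - s₀) (sqf' s₀ - w2) x := by
      rw [hsub, ← hcomm]
      ring
    have hAle := hΦlow s₀ hs₀'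
    rw [hkey]
    calc Q (t - s₀) (sqf' s₀ - w2) x ≤ Q (t - s₀) w3 x := hQle
      _ = -2 * Q (t - s₀) (gam s₀) x + 2*K*Q (t - s₀) (sqf s₀) x := hQw3
      _ ≤ 2 * K * Q (t - s₀) (sqf s₀) x - 2 * A := by linarith [hAle]
  -- the weighted function is antitone
  have hZanti : AntitoneOn
      (fun s => Real.exp (-(2*K)*s) * (Q (t - s) (sqf s) x - A / K))
      (Set.Icc 0 t) := by
    refine antitoneOn_of_deriv_nonpos (convex_Icc 0 t) ?_ ?_ ?_
    · exact ((Real.continuous_exp.comp (continuous_const.mul continuous_id)).continuousOn).mul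
        (hSLsq.2.sub continuousOn_const)
    · intro s hs
      rw [interior_Icc] at hs
      have hexp : HasDerivAt (fun s => Real.exp (-(2*K)*s))
          (Real.exp (-(2*K)*s)*(-(2*K))) s := by
        simpa using ((hasDerivAt_id s).const_mul (-(2*K))).exp
      exact (hexp.mul ((hSLsq.1 s hs).sub_const _)).differentiableAt.differentiableWithinAt
    · intro s hs
      rw [interior_Icc] at hs
      have hexp : HasDerivAt (fun s => Real.exp (-(2*K)*s))
          (Real.exp (-(2*K)*s)*(-(2*K))) s := by
        simpa using ((hasDerivAt_id s).const_mul (-(2*K))).exp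
      have hder := hexp.mul ((hSLsq.1 s hs).sub_const (A / K))
      have hder' : HasDerivAt (fun s => Real.exp (-(2*K)*s) * (Q (t - s) (sqf s) x - A / K)) _ s := hder
      rw [hder'.deriv]
      have hH := hHd s hs
      have he := Real.exp_pos (-(2*K)*s)
      have hfield : (-(2*K)) * (Q (t - s) (sqf s) x - A / K)
          = -(2*K) * Q (t - s) (sqf s) x + 2 * A := by
        field_simp
        ring
      have hbr : ((2 • ρ) x * Q (t - s) (sqf s) x - G.lap (Q (t - s) (sqf s)) x
          + Q (t - s) (sqf' s) x)
          + (-(2*K) * Q (t - s) (sqf s) x + 2 * A) ≤ 0 := by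
        linarith [hH]
      have hprod : Real.exp (-(2*K)*s) * (((2 • ρ) x * Q (t - s) (sqf s) x
          - G.lap (Q (t - s) (sqf s)) x + Q (t - s) (sqf' s) x)
          + (-(2*K) * Q (t - s) (sqf s) x + 2 * A)) ≤ 0 :=
        mul_nonpos_iff.mpr (Or.inl ⟨he.le, hbr⟩)
      calc Real.exp (-(2*K)*s)*(-(2*K)) * (Q (t - s) (sqf s) x - A / K)
          + Real.exp (-(2*K)*s) * ((2 • ρ) x * Q (t - s) (sqf s) x
            - G.lap (Q (t - s) (sqf s)) x + Q (t - s) (sqf' s) x)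
          = Real.exp (-(2*K)*s) * (((2 • ρ) x * Q (t - s) (sqf s) x
            - G.lap (Q (t - s) (sqf s)) x + Q (t - s) (sqf' s) x)
            + (-(2*K) * Q (t - s) (sqf s) x + 2 * A)) := by
            rw [mul_assoc, hfield]
            ring
        _ ≤ 0 := hprod
  -- endpoint values
  have hZt : Real.exp (-(2*K)*t) * (Q (t - t) (sqf t) x - A / K)
      ≤ Real.exp (-(2*K)*0) * (Q (t - 0) (sqf 0) x - A / K) :=
    hZanti (Set.left_mem_Icc.mpr ht.le) (Set.right_mem_Icc.mpr ht.le) ht.le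
  have hZ0 : Real.exp (-(2*K)*(0:ℝ)) = 1 := by
    rw [mul_zero, Real.exp_zero]
  have hH0eq : Q (t - 0) (sqf 0) x = Q t (f * f) x := by
    rw [sub_zero]
    have hsq0 : sqf 0 = f * f := by
      simp only [hsqdef]
      rw [hP1]
    rw [hsq0]
  have hH0le : Q t (f * f) x ≤ Real.exp (K*(T - t)) * (C*C) := by
    refine (le_abs_self _).trans ?_
    refine hQnorm t ht (f*f) (C*C) (mul_nonneg hC0 hC0) (fun y => ?_) x
    simp only [Pi.mul_apply, abs_mul]
    exact mul_le_mul (hC y) (hC y) (abs_nonneg _) hC0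
  have hHteq : Q (t - t) (sqf t) x = P t f x * P t f x := by
    rw [sub_self]
    have h0 := congrFun (hQ1 (sqf t)) x
    rw [h0]
    simp only [hsqdef, Pi.mul_apply]
  have hHt0 : 0 ≤ P t f x * P t f x := mul_self_nonneg _
  rw [hHteq, hH0eq, hZ0, one_mul] at hZt
  set E : ℝ := Real.exp (-(2*K)*t) with hEdef
  have hEpos : 0 < E := Real.exp_pos _
  have hmain : A * (1 - E) ≤ K * Real.exp (K*(T - t)) * (C*C) := by
    have hstep : A/K * (1 - E) ≤ Real.exp (K*(T - t))*(C*C) := by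
      nlinarith [hZt, hH0le, mul_nonneg hEpos.le hHt0]
    have hmul := mul_le_mul_of_nonneg_left hstep hK.le
    calc A*(1 - E) = K*(A/K*(1 - E)) := by field_simp
      _ ≤ K*(Real.exp (K*(T - t))*(C*C)) := hmul
      _ = K*Real.exp (K*(T - t))*(C*C) := by ring
  -- identities
  have e1 : Real.exp (-(K*t)) * Real.exp (K*t) = 1 := by
    rw [← Real.exp_add]
    simp
  have e2 : Real.exp (-(K*t)) * Real.exp (-(K*t)) = E := by
    rw [hEdef, ← Real.exp_add]
    congr 1
    ring
  have hid : 1 - E = 2 * Real.exp (-(K*t)) * Real.sinh (K*t) := by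
    rw [Real.sinh_eq]
    linear_combination -e1 + e2
  have hsinh : 0 < Real.sinh (K*t) := by
    rw [Real.sinh_pos_iff]
    positivity
  have eT : Real.exp (K*(T - t)) = Real.exp (K*T) * Real.exp (-(K*t)) := by
    rw [← Real.exp_add]
    congr 1
    ring
  have ha := Real.exp_pos (-(K*t))
  have h2 : A * (2*Real.sinh (K*t)) ≤ K * Real.exp (K*T) * (C*C) := by
    have hmain2 : Real.exp (-(K*t)) * (A * (2*Real.sinh (K*t)))
        ≤ Real.exp (-(K*t)) * (K * Real.exp (K*T) * (C*C)) := by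
      calc Real.exp (-(K*t)) * (A * (2*Real.sinh (K*t)))
          = A * (1 - E) := by rw [hid]; ring
        _ ≤ K * Real.exp (K*(T - t)) * (C*C) := hmain
        _ = Real.exp (-(K*t)) * (K * Real.exp (K*T) * (C*C)) := by rw [eT]; ring
    exact le_of_mul_le_mul_left hmain2 ha
  constructor
  · rw [div_mul_eq_mul_div, le_div_iff₀ hsinh]
    have hC2 : C^2 = C*C := sq C
    rw [hC2]
    nlinarith [h2, mul_nonneg hA0 hsinh.le]
  · refine mul_le_mul_of_nonneg_right ?_ (sq_nonneg C)
    rw [div_le_div_iff₀ hsinh ht]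
    have hst := (Real.self_lt_sinh_iff.mpr (by positivity : (0:ℝ) < K*t)).le
    nlinarith [Real.exp_pos (K*T), hst]
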